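/- arXiv:2511.11765 — 7 statements merged into one kernel-verified Lean document; each statement's English description precedes it below -/
import Mathlib

section
/- Let α, β, a, b, Λ be real numbers with β ≠ 0, Λ ≠ 0, and set Ω + 1 = (β(a+1) + α(1-b))/β. Suppose y : ℝ → ℝ and s : ℝ → ℝ are differentiable with y, y' positive, and Y : ℝ → ℝ satisfies Y(s(x)) = y(x)^α · y'(x)^β and s'(x) = Λ⁻¹ · y(x)^a · y'(x)^b for all x. If Ω ≠ -1, then the function x ↦ y(x)^(Ω+1)/(Λ(Ω+1)) differs by a constant from x ↦ ∫ Y(s)^((1-b)/β) ds evaluated along s(x); that is, d/dx [ y(x)^(Ω+1)/(Λ(Ω+1)) ] = Y(s(x))^((1-b)/β) · s'(x) for all x. -/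
/-! Along the curve, `Y(s)^((1-b)/β) · s'` is a product of powers of `y` and `y'`; the choice of
`Ω` makes the `y'` exponents add up to `1`, so it equals `y^Ω · y' / Λ`, the derivative of
`y^(Ω+1) / (Λ (Ω+1))` by the chain rule. -/

theorem HasDerivAt.rpow_const_div_const_mul {f : ℝ → ℝ} {f' x p c : ℝ}
    (hf : HasDerivAt f f' x) (hx : f x ≠ 0) (hp : p ≠ 0) :
    HasDerivAt (fun t => f t ^ p / (c * p)) (f x ^ (p - 1) * f' / c) x := by
  refine ((hf.rpow_const (Or.inl hx)).div_const (c * p)).congr_deriv ?_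
  rw [mul_comm c p, ← div_div]
  congr 1
  field_simp

theorem sundman_integrand_eq {u v α β a b : ℝ}
    (hu : 0 < u) (hv : 0 < v) (hβ : β ≠ 0) :
    (u ^ α * v ^ β) ^ ((1 - b) / β) * (u ^ a * v ^ b) = u ^ (a + α * (1 - b) / β) * v := by
  rw [Real.mul_rpow (by positivity) (by positivity), ← Real.rpow_mul hu.le,
    ← Real.rpow_mul hv.le, mul_div_cancel₀ _ hβ]
  calc u ^ (α * ((1 - b) / β)) * v ^ (1 - b) * (u ^ a * v ^ b)
      = u ^ (α * ((1 - b) / β) + a) * v ^ (1 - b + b) := by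
        rw [Real.rpow_add hu, Real.rpow_add hv]; ring
    _ = u ^ (a + α * (1 - b) / β) * v := by ring_nf; rw [Real.rpow_one]

theorem stmt0_general (α β a b Λ Ω : ℝ) (hβ : β ≠ 0)
    (hΩdef : Ω + 1 = (β * (a + 1) + α * (1 - b)) / β) (hΩ : Ω ≠ -1)
    (y y' s s' Y : ℝ → ℝ)
    (hy : ∀ x, HasDerivAt y (y' x) x)
    (hypos : ∀ x, 0 < y x) (hy'pos : ∀ x, 0 < y' x)
    (hY : ∀ x, Y (s x) = y x ^ α * y' x ^ β)
    (hs' : ∀ x, s' x = Λ⁻¹ * y x ^ a * y' x ^ b) :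
    ∀ x, HasDerivAt (fun t => y t ^ (Ω + 1) / (Λ * (Ω + 1)))
      (Y (s x) ^ ((1 - b) / β) * s' x) x := by
  intro x
  have hΩ_eq : Ω = a + α * (1 - b) / β := by
    rw [add_div, mul_div_cancel_left₀ _ hβ] at hΩdef
    linarith
  refine ((hy x).rpow_const_div_const_mul (c := Λ) (hypos x).ne'
    (fun h => hΩ (eq_neg_of_add_eq_zero_left h))).congr_deriv ?_
  symm
  rw [hY, hs', mul_assoc, mul_left_comm,
    sundman_integrand_eq (hypos x) (hy'pos x) hβ, add_sub_cancel_right,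
    hΩ_eq, inv_mul_eq_div]

theorem stmt0 (α β a b Λ Ω : ℝ) (hβ : β ≠ 0) (hΛ : Λ ≠ 0)
    (hΩdef : Ω + 1 = (β * (a + 1) + α * (1 - b)) / β) (hΩ : Ω ≠ -1)
    (y y' s s' Y : ℝ → ℝ)
    (hy : ∀ x, HasDerivAt y (y' x) x)
    (hs : ∀ x, HasDerivAt s (s' x) x)
    (hypos : ∀ x, 0 < y x) (hy'pos : ∀ x, 0 < y' x)
    (hY : ∀ x, Y (s x) = y x ^ α * y' x ^ β)
    (hs' : ∀ x, s' x = Λ⁻¹ * y x ^ a * y' x ^ b) :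
    ∀ x, HasDerivAt (fun t => y t ^ (Ω + 1) / (Λ * (Ω + 1)))
      (Y (s x) ^ ((1 - b) / β) * s' x) x :=
  stmt0_general α β a b Λ Ω hβ hΩdef hΩ y y' s s' Y hy hypos hy'pos hY hs'
end

section
/- Let α, β, a, b, Λ be real numbers with β ≠ 0, Λ ≠ 0, and Ω := a + α(1-b)/β = -1. Suppose y, s : ℝ → ℝ are differentiable with y, y' positive, and Y satisfies Y(s(x)) = y(x)^α y'(x)^β and s'(x) = Λ⁻¹ y(x)^a y'(x)^b for all x. Then d/dx [ log y(x) ] = Λ · Y(s(x))^((1-b)/β) · s'(x) for all x; equivalently, y(x) = K₃ · exp(Λ ∫ Y^((1-b)/β) ds) for some constant K₃ > 0. -/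
theorem stmt1 (α β a b Λ : ℝ) (hβ : β ≠ 0) (hΛ : Λ ≠ 0)
    (hΩ : a + α * (1 - b) / β = -1)
    (y y' s s' Y : ℝ → ℝ)
    (hy : ∀ x, HasDerivAt y (y' x) x)
    (hs : ∀ x, HasDerivAt s (s' x) x)
    (hypos : ∀ x, 0 < y x) (hy'pos : ∀ x, 0 < y' x)
    (hY : ∀ x, Y (s x) = y x ^ α * y' x ^ β)
    (hs' : ∀ x, s' x = Λ⁻¹ * y x ^ a * y' x ^ b) :
    ∀ x, HasDerivAt (fun t => Real.log (y t))
      (Λ * Y (s x) ^ ((1 - b) / β) * s' x) x := by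
  intro x
  have hlog := (hy x).log (ne_of_gt (hypos x))
  convert hlog using 1
  rw [hY x, hs' x]
  have hyp := hypos x
  have hy'p := hy'pos x
  rw [Real.mul_rpow (Real.rpow_nonneg hyp.le _) (Real.rpow_nonneg hy'p.le _),
    ← Real.rpow_mul hyp.le, ← Real.rpow_mul hy'p.le]
  have hb : β * ((1 - b) / β) = 1 - b := by field_simp
  rw [hb]
  rw [show Λ * (y x ^ (α * ((1 - b) / β)) * y' x ^ (1 - b)) * (Λ⁻¹ * y x ^ a * y' x ^ b)
      = (Λ * Λ⁻¹) * (y x ^ (α * ((1 - b) / β)) * y x ^ a) * (y' x ^ (1 - b) * y' x ^ b) by ring,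
    mul_inv_cancel₀ hΛ, ← Real.rpow_add hyp, ← Real.rpow_add hy'p]
  have : α * ((1 - b) / β) + a = -1 := by rw [← hΩ]; ring
  rw [this, show (1 - b) + b = 1 by ring, Real.rpow_one, Real.rpow_neg_one]
  field_simp
end

section
/- For real parameters (k₁, α₁, a₁, b₁), (k₂, α₂, a₂, b₂), (k₃, α₃, a₃, b₃) with all kᵢ > 0 and αᵢ > 0, the composition law γ = αδ, c = a + Aα + B(α - a - 1), d = b + B(1-b), j⁻¹ = α^B/(Λ^{1-B}Δ) is associative; in particular the triple composition has exponent α₃α₂α₁, derivative-power b̄ = b₁ + b₂(1-b₁) + b₃(1-b₂)(1-b₁), function-power ā = a₁ + a₂α₁ + a₃α₂α₁ + b₃α₁(α₂ - a₂ - 1) + (b₃ + b₂ - b₃b₂)(α₁ - a₁ - 1), and scale (k̄)⁻¹ = α₂^{b₃} α₁^{b₃ + b₂ - b₃b₂} / (k₃ k₂^{1-b₃} k₁^{(1-b₃)(1-b₂)}), independently of the bracketing. -/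
/-- Composition law of β = 0 generalized Sundman transformations on parameter
tuples (Λ, α, a, b): the first argument is the outer transformation. -/
noncomputable def sundmanMul (P Q : ℝ × ℝ × ℝ × ℝ) : ℝ × ℝ × ℝ × ℝ :=
  ((Q.2.1 ^ P.2.2.2 / (Q.1 ^ (1 - P.2.2.2) * P.1))⁻¹,
    Q.2.1 * P.2.1,
    Q.2.2.1 + P.2.2.1 * Q.2.1 + P.2.2.2 * (Q.2.1 - Q.2.2.1 - 1),
    Q.2.2.2 + P.2.2.2 * (1 - Q.2.2.2))

theorem stmt6 (k₁ α₁ a₁ b₁ k₂ α₂ a₂ b₂ k₃ α₃ a₃ b₃ : ℝ)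
    (hk₁ : 0 < k₁) (hk₂ : 0 < k₂) (hk₃ : 0 < k₃)
    (hα₁ : 0 < α₁) (hα₂ : 0 < α₂) (hα₃ : 0 < α₃) :
    sundmanMul (k₃, α₃, a₃, b₃) (sundmanMul (k₂, α₂, a₂, b₂) (k₁, α₁, a₁, b₁)) =
      sundmanMul (sundmanMul (k₃, α₃, a₃, b₃) (k₂, α₂, a₂, b₂)) (k₁, α₁, a₁, b₁) ∧
    sundmanMul (k₃, α₃, a₃, b₃) (sundmanMul (k₂, α₂, a₂, b₂) (k₁, α₁, a₁, b₁)) =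
      ((α₂ ^ b₃ * α₁ ^ (b₃ + b₂ - b₃ * b₂) /
          (k₃ * k₂ ^ (1 - b₃) * k₁ ^ ((1 - b₃) * (1 - b₂))))⁻¹,
        α₃ * α₂ * α₁,
        a₁ + a₂ * α₁ + a₃ * α₂ * α₁ + b₃ * α₁ * (α₂ - a₂ - 1) +
          (b₃ + b₂ - b₃ * b₂) * (α₁ - a₁ - 1),
        b₁ + b₂ * (1 - b₁) + b₃ * (1 - b₂) * (1 - b₁)) := by
  obtain ⟨x₁, rfl⟩ : ∃ x, Real.exp x = k₁ := ⟨Real.log k₁, Real.exp_log hk₁⟩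
  obtain ⟨x₂, rfl⟩ : ∃ x, Real.exp x = k₂ := ⟨Real.log k₂, Real.exp_log hk₂⟩
  obtain ⟨x₃, rfl⟩ : ∃ x, Real.exp x = k₃ := ⟨Real.log k₃, Real.exp_log hk₃⟩
  obtain ⟨y₁, rfl⟩ : ∃ x, Real.exp x = α₁ := ⟨Real.log α₁, Real.exp_log hα₁⟩
  obtain ⟨y₂, rfl⟩ : ∃ x, Real.exp x = α₂ := ⟨Real.log α₂, Real.exp_log hα₂⟩
  simp only [sundmanMul, Prod.mk.injEq]
  refine ⟨⟨?_, by ring, by ring, by ring⟩, ⟨?_, by ring, by ring, by ring⟩⟩ <;>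
  · simp only [← Real.exp_add, ← Real.exp_sub, ← Real.exp_neg, ← Real.exp_mul,
      div_eq_mul_inv]
    rw [Real.exp_eq_exp]
    ring
end

section
/- Let l, m, n, A, B, α, a, b be real with α ≠ 0, b ≠ 1, l ≠ 0. Suppose y : ℝ → ℝ is differentiable, positive, with positive derivative, satisfying (y'(x))^l = A·y(x)^m + B·y(x)^n for all x, with the right-hand side positive. Let Y and s be defined by Y(s(x)) = y(x)^α with s'(x) = α·y(x)^a·y'(x)^b (i.e., the β = 0 GST with Λ = α⁻¹), with s strictly monotone. Then Y satisfies (dY/ds)^L = A·Y^M + B·Y^N with L = l/(1-b), M = m/α + l(α - a - 1)/(α(1-b)), N = n/α + l(α - a - 1)/(α(1-b)). -/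
/-!
Differentiating `Y (s x) = y x ^ α` by the chain rule and dividing by `s' = α y^a y'^b` gives
`dY/ds = y^(α-1-a) y'^(1-b)`. Raising this to `L = l/(1-b)` turns the factor `y'^(1-b)` into `y'^l`,
which the ODE for `y` replaces by `A y^m + B y^n`; the leftover power of `y` is rewritten as a
power of `Y = y^α`, which produces the shifted exponents `M` and `N`.
-/

open Real

lemma mul_deriv_eq_of_comp_eq_rpow {y s Y : ℝ → ℝ} {x y' s' Yd α : ℝ} (hyx : y x ≠ 0)
    (hy : HasDerivAt y y' x) (hs : HasDerivAt s s' x) (hY : ∀ t, Y (s t) = y t ^ α)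
    (hYd : HasDerivAt Y Yd (s x)) :
    Yd * s' = y' * α * y x ^ (α - 1) := by
  have hcomp : HasDerivAt (fun t => y t ^ α) (Yd * s') x := funext hY ▸ hYd.comp x hs
  exact hcomp.unique (hy.rpow_const (Or.inl hyx))

lemma eq_rpow_mul_rpow_of_mul_eq {u v Yd α a b : ℝ} (hu : 0 < u) (hv : 0 < v) (hα : α ≠ 0)
    (h : Yd * (α * u ^ a * v ^ b) = v * α * u ^ (α - 1)) :
    Yd = u ^ (α - 1 - a) * v ^ (1 - b) := by
  have hs : α * u ^ a * v ^ b ≠ 0 := by positivity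
  apply mul_right_cancel₀ hs
  rw [h]
  calc v * α * u ^ (α - 1)
      = α * u ^ (α - 1 - a + a) * v ^ (1 - b + b) := by
        rw [sub_add_cancel, sub_add_cancel, rpow_one]; ring
    _ = u ^ (α - 1 - a) * v ^ (1 - b) * (α * u ^ a * v ^ b) := by
        rw [rpow_add hu, rpow_add hv]; ring

lemma rpow_mul_rpow_sub_rpow_div {u v c l b : ℝ} (hu : 0 < u) (hv : 0 < v) (hb : b ≠ 1) :
    (u ^ c * v ^ (1 - b)) ^ (l / (1 - b)) = u ^ (c * (l / (1 - b))) * v ^ l := by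
  have hb' : 1 - b ≠ 0 := sub_ne_zero.mpr hb.symm
  rw [mul_rpow (by positivity) (by positivity), ← rpow_mul hu.le, ← rpow_mul hv.le,
    mul_div_cancel₀ l hb']

lemma rpow_rpow_div_add_div {u α p q : ℝ} (hu : 0 < u) (hα : α ≠ 0) :
    (u ^ α) ^ (p / α + q / α) = u ^ p * u ^ q := by
  rw [← rpow_mul hu.le, ← rpow_add hu, mul_add, mul_div_cancel₀ p hα, mul_div_cancel₀ q hα]

theorem stmt7_general (l m n A B α a b : ℝ) (hα : α ≠ 0) (hb : b ≠ 1)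
    (y y' s Y Ydot : ℝ → ℝ)
    (hy : ∀ x, HasDerivAt y (y' x) x)
    (hypos : ∀ x, 0 < y x) (hy'pos : ∀ x, 0 < y' x)
    (hODE : ∀ x, y' x ^ l = A * y x ^ m + B * y x ^ n)
    (hs : ∀ x, HasDerivAt s (α * y x ^ a * y' x ^ b) x)
    (hY : ∀ x, Y (s x) = y x ^ α)
    (hYd : ∀ x, HasDerivAt Y (Ydot (s x)) (s x)) :
    ∀ x, Ydot (s x) ^ (l / (1 - b)) =
      A * Y (s x) ^ (m / α + l * (α - a - 1) / (α * (1 - b))) +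
      B * Y (s x) ^ (n / α + l * (α - a - 1) / (α * (1 - b))) := by
  intro x
  have hYdot : Ydot (s x) = y x ^ (α - 1 - a) * y' x ^ (1 - b) :=
    eq_rpow_mul_rpow_of_mul_eq (hypos x) (hy'pos x) hα
      (mul_deriv_eq_of_comp_eq_rpow (hypos x).ne' (hy x) (hs x) hY (hYd x))
  have hexp : ∀ p, p / α + l * (α - a - 1) / (α * (1 - b)) =
      p / α + (α - 1 - a) * (l / (1 - b)) / α := by
    have hb' : 1 - b ≠ 0 := sub_ne_zero.mpr hb.symm
    intro p
    field_simp
    ring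
  rw [hYdot, rpow_mul_rpow_sub_rpow_div (hypos x) (hy'pos x) hb, hY x, hexp m, hexp n,
    rpow_rpow_div_add_div (hypos x) hα, rpow_rpow_div_add_div (hypos x) hα, hODE x]
  ring

theorem stmt7 (l m n A B α a b : ℝ) (hα : α ≠ 0) (hb : b ≠ 1) (hl : l ≠ 0)
    (y y' s Y Ydot : ℝ → ℝ)
    (hy : ∀ x, HasDerivAt y (y' x) x)
    (hypos : ∀ x, 0 < y x) (hy'pos : ∀ x, 0 < y' x)
    (hODE : ∀ x, y' x ^ l = A * y x ^ m + B * y x ^ n)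
    (hrhs : ∀ x, 0 < A * y x ^ m + B * y x ^ n)
    (hs : ∀ x, HasDerivAt s (α * y x ^ a * y' x ^ b) x)
    (hmono : StrictMono s ∨ StrictAnti s)
    (hY : ∀ x, Y (s x) = y x ^ α)
    (hYd : ∀ x, HasDerivAt Y (Ydot (s x)) (s x)) :
    ∀ x, Ydot (s x) ^ (l / (1 - b)) =
      A * Y (s x) ^ (m / α + l * (α - a - 1) / (α * (1 - b))) +
      B * Y (s x) ^ (n / α + l * (α - a - 1) / (α * (1 - b))) :=
  stmt7_general l m n A B α a b hα hb y y' s Y Ydot hy hypos hy'pos hODE hs hY hYd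
end

section
/- Let k₁ ≠ 0, k₂ ∈ ℝ, K > 0, and q ∈ ℝ. Let ψ₁(z) = K e^{k₁ z} - k₂/k₁ (assumed positive on the relevant interval); it satisfies ψ₁' = k₁ψ₁ + k₂. Define Ψ via the Sundman transformation Ψ(s(z)) = ψ₁(z) with s'(z) = ψ₁(z)^{1-q}. Then Ψ satisfies dΨ/ds = k₁ Ψ^q + k₂ Ψ^{q-1}, i.e., Ψ is a traveling-wave solution of the free NRT equation with nonlinearity parameter q. -/
theorem stmt15 (k₁ k₂ K q : ℝ) (hk₁ : k₁ ≠ 0) (hK : 0 < K)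
    (ψ₁ : ℝ → ℝ) (hψ₁ : ψ₁ = fun z => K * Real.exp (k₁ * z) - k₂ / k₁)
    (hpos : ∀ z, 0 < ψ₁ z)
    (s Ψ Ψd : ℝ → ℝ)
    (hs : ∀ z, HasDerivAt s (ψ₁ z ^ (1 - q)) z)
    (hΨ : ∀ z, Ψ (s z) = ψ₁ z)
    (hΨd : ∀ z, HasDerivAt Ψ (Ψd (s z)) (s z)) :
    (∀ z, HasDerivAt ψ₁ (k₁ * ψ₁ z + k₂) z) ∧
      ∀ z, Ψd (s z) = k₁ * Ψ (s z) ^ q + k₂ * Ψ (s z) ^ (q - 1) := by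
  have hderiv : ∀ z, HasDerivAt ψ₁ (k₁ * ψ₁ z + k₂) z := by
    intro z
    subst hψ₁
    have h : HasDerivAt (fun z => K * Real.exp (k₁ * z) - k₂ / k₁)
        (K * (Real.exp (k₁ * z) * k₁)) z := by
      have := (Real.hasDerivAt_exp (k₁ * z)).comp z
        ((hasDerivAt_id z).const_mul k₁)
      simpa using (this.const_mul K).sub_const (k₂ / k₁)
    convert h using 1
    field_simp
    ring
  refine ⟨hderiv, fun z => ?_⟩
  have hcomp : HasDerivAt (fun z => Ψ (s z)) (Ψd (s z) * ψ₁ z ^ (1 - q)) z :=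
    (hΨd z).comp z (hs z)
  have hcomp' : HasDerivAt (fun z => Ψ (s z)) (k₁ * ψ₁ z + k₂) z := by
    have : (fun z => Ψ (s z)) = ψ₁ := funext hΨ
    rw [this]; exact hderiv z
  have heq : Ψd (s z) * ψ₁ z ^ (1 - q) = k₁ * ψ₁ z + k₂ :=
    hcomp.unique hcomp'
  have hp := hpos z
  have hne : ψ₁ z ^ (1 - q) ≠ 0 := (Real.rpow_pos_of_pos hp _).ne'
  have : Ψd (s z) = (k₁ * ψ₁ z + k₂) * ψ₁ z ^ (q - 1) := by
    rw [← heq, mul_assoc, ← Real.rpow_add hp]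
    simp
  have h2 : ψ₁ z ^ q = ψ₁ z * ψ₁ z ^ (q - 1) := by
    rw [show q = 1 + (q - 1) by ring, Real.rpow_add hp, Real.rpow_one]
    ring_nf
  rw [this, hΨ z, h2]; ring
end

section
/- Let a, p, q ∈ ℝ. Suppose ψ : [z₀, z₁] → ℝ is positive and differentiable, satisfying ψ' = k₁ψ^{q+a} + k₂ψ^{q+a-1} with positive right-hand side, and let s : [z₀, z₁] → ℝ satisfy s'(z) = ψ(z)^a with Ψ(s(z)) = ψ(z). Then ∫ over the s-interval of Ψ(s)^p ds equals ∫_{z₀}^{z₁} ψ(z)^{p+a} dz. In other words, writing W_p[y] = ∫ y^p, one has W_p[Ψ] = W_{p+a}[ψ]. -/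
theorem stmt16 (a p q k₁ k₂ z₀ z₁ : ℝ) (hz : z₀ ≤ z₁)
    (ψ s Ψ : ℝ → ℝ)
    (hψpos : ∀ z ∈ Set.Icc z₀ z₁, 0 < ψ z)
    (hψ : ∀ z ∈ Set.Icc z₀ z₁,
      HasDerivAt ψ (k₁ * ψ z ^ (q + a) + k₂ * ψ z ^ (q + a - 1)) z)
    (hrhs : ∀ z ∈ Set.Icc z₀ z₁,
      0 < k₁ * ψ z ^ (q + a) + k₂ * ψ z ^ (q + a - 1))
    (hs : ∀ z ∈ Set.Icc z₀ z₁, HasDerivAt s (ψ z ^ a) z)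
    (hΨ : ∀ z ∈ Set.Icc z₀ z₁, Ψ (s z) = ψ z)
    (hΨcont : ContinuousOn Ψ (s '' Set.Icc z₀ z₁)) :
    ∫ t in s z₀..s z₁, Ψ t ^ p = ∫ z in z₀..z₁, ψ z ^ (p + a) := by
  have huIcc : Set.uIcc z₀ z₁ = Set.Icc z₀ z₁ := Set.uIcc_of_le hz
  have hψcont : ContinuousOn ψ (Set.Icc z₀ z₁) := fun z hz' =>
    ((hψ z hz').continuousAt).continuousWithinAt
  have hs' : ∀ x ∈ Set.uIcc z₀ z₁, HasDerivAt s (ψ x ^ a) x := by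
    rw [huIcc]; exact hs
  have hcont' : ContinuousOn (fun z => ψ z ^ a) (Set.uIcc z₀ z₁) := by
    rw [huIcc]
    exact ContinuousOn.rpow_const hψcont fun z hz' => Or.inl (hψpos z hz').ne'
  have hg : ContinuousOn (fun t => Ψ t ^ p) (s '' Set.uIcc z₀ z₁) := by
    rw [huIcc]
    refine ContinuousOn.rpow_const hΨcont ?_
    rintro t ⟨z, hz', rfl⟩
    exact Or.inl (by rw [hΨ z hz']; exact (hψpos z hz').ne')
  have := intervalIntegral.integral_comp_smul_deriv' hs' hcont' hg
  rw [← this]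
  apply intervalIntegral.integral_congr
  intro z hz'
  rw [huIcc] at hz'
  have hpos := hψpos z hz'
  simp only [Function.comp, smul_eq_mul, hΨ z hz']
  rw [← Real.rpow_add hpos]
  ring_nf
end

section
/- Let q ∈ ℝ, and let ψ₁ : ℝ → ℝ be positive and twice differentiable. Suppose ψ_q and z are defined via ψ_q(z(s)) = ψ₁(s) and z'(s) = ψ₁(s)^{1-q} with z strictly monotone. If ψ₁ satisfies the second-order equation ψ₁' = K₄(ψ₁'' ) + K₅ψ₁ (the q = 1 Rego-Monteiro equation), then ψ_q satisfies ψ_q' = K₄ ψ_q^{1-q}(ψ_q'' + (1-q)(ψ_q')²/ψ_q) + K₅ ψ_q^q, where derivatives of ψ_q are with respect to z. -/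
/-!
Along the Sundman transformation `dz = w(s) ds` the derivative in `z` is `w⁻¹ d/ds`. With
`w = ψ₁ ^ (1 - q)` this gives `dψ_q/dz = ψ₁' ψ₁ ^ (q - 1)` and, differentiating once more,
`ψ₁ ^ (1 - q) d²ψ_q/dz² = ψ₁'' ψ₁ ^ (q - 1) + (q - 1) ψ₁'² ψ₁ ^ (q - 2)`. The second term is exactly
cancelled by `(1 - q) (dψ_q/dz)² / ψ_q`, so the right-hand side of the nonlinear equation collapses
to `ψ₁ ^ (q - 1) (K₄ ψ₁'' + K₅ ψ₁)`, which is `ψ₁ ^ (q - 1) ψ₁' = dψ_q/dz` by the linear equation.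
-/

lemma Real.rpow_one_sub_inv {x : ℝ} (hx : 0 ≤ x) (q : ℝ) : (x ^ (1 - q))⁻¹ = x ^ (q - 1) := by
  rw [← Real.rpow_neg hx, neg_sub]

lemma HasDerivAt.mul_eq_of_comp_eq {g z f : ℝ → ℝ} {g' z' f' s : ℝ}
    (hcomp : ∀ t, g (z t) = f t) (hg : HasDerivAt g g' (z s)) (hz : HasDerivAt z z' s)
    (hf : HasDerivAt f f' s) : g' * z' = f' := by
  have hgz : HasDerivAt (g ∘ z) (g' * z') s := hg.comp s hz
  rw [show g ∘ z = f from funext hcomp] at hgz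
  exact hgz.unique hf

section Sundman

variable {q : ℝ} {ψ₁ ψ₁' z ψq Dψq : ℝ → ℝ}

lemma sundman_deriv_eq (hψ₁ : ∀ s, HasDerivAt ψ₁ (ψ₁' s) s) (hpos : ∀ s, 0 < ψ₁ s)
    (hz : ∀ s, HasDerivAt z (ψ₁ s ^ (1 - q)) s) (hψq : ∀ s, ψq (z s) = ψ₁ s)
    (hD : ∀ s, HasDerivAt ψq (Dψq (z s)) (z s)) (s : ℝ) :
    Dψq (z s) = ψ₁' s * ψ₁ s ^ (q - 1) := by
  have hspeed : ψ₁ s ^ (1 - q) ≠ 0 := (Real.rpow_pos_of_pos (hpos s) _).ne'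
  rw [← Real.rpow_one_sub_inv (hpos s).le, ← div_eq_mul_inv]
  exact eq_div_of_mul_eq hspeed ((hD s).mul_eq_of_comp_eq hψq (hz s) (hψ₁ s))

lemma sundman_second_deriv_mul_eq {ψ₁'' DDψq : ℝ → ℝ}
    (hψ₁ : ∀ s, HasDerivAt ψ₁ (ψ₁' s) s) (hψ₁' : ∀ s, HasDerivAt ψ₁' (ψ₁'' s) s)
    (hpos : ∀ s, 0 < ψ₁ s) (hz : ∀ s, HasDerivAt z (ψ₁ s ^ (1 - q)) s)
    (hψq : ∀ s, ψq (z s) = ψ₁ s) (hD : ∀ s, HasDerivAt ψq (Dψq (z s)) (z s))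
    (hDD : ∀ s, HasDerivAt Dψq (DDψq (z s)) (z s)) (s : ℝ) :
    DDψq (z s) * ψ₁ s ^ (1 - q) =
      ψ₁'' s * ψ₁ s ^ (q - 1) + ψ₁' s * (ψ₁' s * (q - 1) * ψ₁ s ^ (q - 1 - 1)) :=
  (hDD s).mul_eq_of_comp_eq (sundman_deriv_eq hψ₁ hpos hz hψq hD) (hz s)
    ((hψ₁' s).mul ((hψ₁ s).rpow_const (Or.inl (hpos s).ne')))

end Sundman

theorem stmt19_general (q K₄ K₅ : ℝ)
    (ψ₁ ψ₁' ψ₁'' z ψq Dψq DDψq : ℝ → ℝ)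
    (hψ₁ : ∀ s, HasDerivAt ψ₁ (ψ₁' s) s)
    (hψ₁' : ∀ s, HasDerivAt ψ₁' (ψ₁'' s) s)
    (hpos : ∀ s, 0 < ψ₁ s)
    (hz : ∀ s, HasDerivAt z (ψ₁ s ^ (1 - q)) s)
    (hψq : ∀ s, ψq (z s) = ψ₁ s)
    (hD : ∀ s, HasDerivAt ψq (Dψq (z s)) (z s))
    (hDD : ∀ s, HasDerivAt Dψq (DDψq (z s)) (z s))
    (hODE : ∀ s, ψ₁' s = K₄ * ψ₁'' s + K₅ * ψ₁ s) :
    ∀ s, Dψq (z s) = K₄ * ψq (z s) ^ (1 - q) *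
        (DDψq (z s) + (1 - q) * (Dψq (z s)) ^ 2 / ψq (z s)) +
      K₅ * ψq (z s) ^ q := by
  intro s
  have hA : ψ₁ s ≠ 0 := (hpos s).ne'
  have hw : ψ₁ s ^ (1 - q) ≠ 0 := (Real.rpow_pos_of_pos (hpos s) _).ne'
  have hinv : ψ₁ s ^ (q - 1) = (ψ₁ s ^ (1 - q))⁻¹ := (Real.rpow_one_sub_inv (hpos s).le q).symm
  have hpow : ψ₁ s ^ q = ψ₁ s * (ψ₁ s ^ (1 - q))⁻¹ := by
    rw [← hinv, Real.rpow_sub_one hA]; field_simp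
  have hD₁ := sundman_deriv_eq hψ₁ hpos hz hψq hD s
  have hDD₁ := sundman_second_deriv_mul_eq hψ₁ hψ₁' hpos hz hψq hD hDD s
  rw [Real.rpow_sub_one hA (q - 1), hinv] at hDD₁
  rw [hψq s, hD₁, hinv, hpow]
  field_simp at hDD₁ ⊢
  linear_combination ψ₁ s * hODE s - K₄ * hDD₁

theorem stmt19 (q K₄ K₅ : ℝ)
    (ψ₁ ψ₁' ψ₁'' z ψq Dψq DDψq : ℝ → ℝ)
    (hψ₁ : ∀ s, HasDerivAt ψ₁ (ψ₁' s) s)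
    (hψ₁' : ∀ s, HasDerivAt ψ₁' (ψ₁'' s) s)
    (hpos : ∀ s, 0 < ψ₁ s)
    (hz : ∀ s, HasDerivAt z (ψ₁ s ^ (1 - q)) s)
    (hmono : StrictMono z)
    (hψq : ∀ s, ψq (z s) = ψ₁ s)
    (hD : ∀ s, HasDerivAt ψq (Dψq (z s)) (z s))
    (hDD : ∀ s, HasDerivAt Dψq (DDψq (z s)) (z s))
    (hODE : ∀ s, ψ₁' s = K₄ * ψ₁'' s + K₅ * ψ₁ s) :
    ∀ s, Dψq (z s) = K₄ * ψq (z s) ^ (1 - q) *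
        (DDψq (z s) + (1 - q) * (Dψq (z s)) ^ 2 / ψq (z s)) +
      K₅ * ψq (z s) ^ q :=
  stmt19_general q K₄ K₅ ψ₁ ψ₁' ψ₁'' z ψq Dψq DDψq hψ₁ hψ₁' hpos hz hψq hD hDD hODE
end
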